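/- arXiv:1902.03984 — 2 statements merged into one kernel-verified Lean document; each statement's English description precedes it below -/
import Mathlib

section
/- Let x, z ∈ EuclideanSpace ℝ (Fin d) with z ≠ 0, let ε > 0, and let (θ_t) and (y_t) be sequences in EuclideanSpace ℝ (Fin d) such that ⟪θ_t, x − y_t⟫ ≥ ε for all t and ‖x − y_t‖ → 0. Then the ratio ‖x − y_t‖ / (‖θ_t‖ * ‖z‖) tends to 0 as t → ∞. -/
open Filter Topology RealInnerProductSpace

/-- If the linear discriminator stays ε-optimal as the fake point approaches the real
point, the ratio of the discriminator's gradient norm `‖x - y t‖` to the generator's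
gradient norm `‖θ t‖ * ‖z‖` tends to 0. -/
theorem grad_ratio_tendsto_zero
    (d : ℕ) (x z : EuclideanSpace ℝ (Fin d)) (hz : z ≠ 0)
    (ε : ℝ) (hε : 0 < ε)
    (θ y : ℕ → EuclideanSpace ℝ (Fin d))
    (hopt : ∀ t, ⟪θ t, x - y t⟫ ≥ ε)
    (hy : Tendsto (fun t => ‖x - y t‖) atTop (𝓝 0)) :
    Tendsto (fun t => ‖x - y t‖ / (‖θ t‖ * ‖z‖)) atTop (𝓝 0) := by
  have hzpos : 0 < ‖z‖ := norm_pos_iff.mpr hz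
  have key : ∀ t, ‖x - y t‖ / (‖θ t‖ * ‖z‖) ≤ ‖x - y t‖ ^ 2 / (ε * ‖z‖) := by
    intro t
    have h1 : ε ≤ ‖θ t‖ * ‖x - y t‖ :=
      le_trans (hopt t) (real_inner_le_norm _ _)
    have hn : 0 < ‖x - y t‖ := by
      by_contra h
      push_neg at h
      have : ‖x - y t‖ = 0 := le_antisymm h (norm_nonneg _)
      rw [this, mul_zero] at h1; linarith
    have hθ : ε / ‖x - y t‖ ≤ ‖θ t‖ := (div_le_iff₀ hn).mpr h1
    have hθpos : 0 < ‖θ t‖ := lt_of_lt_of_le (div_pos hε hn) hθ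
    rw [div_le_div_iff₀ (by positivity) (by positivity)]
    have : ε * ‖x - y t‖ ≤ ‖θ t‖ * ‖x - y t‖ ^ 2 := by nlinarith
    nlinarith [hzpos.le, this]
  have hb : Tendsto (fun t => ‖x - y t‖ ^ 2 / (ε * ‖z‖)) atTop (𝓝 0) := by
    have : Tendsto (fun t => ‖x - y t‖ ^ 2) atTop (𝓝 0) := by
      simpa using (hy.pow 2)
    simpa using this.div_const (ε * ‖z‖)
  exact squeeze_zero (fun t => by positivity) key hb
end

section
/- Let d, n, m be positive natural numbers, let ε ∈ (0, 1), and let v : Fin (n + m) → EuclideanSpace ℝ (Fin d) be an injective family of unit vectors (‖v i‖ = 1 for all i), where the first n vectors are the real samples and the last m vectors are the fake samples. Define weights w : Fin (n + m) → ℝ by w i = 1 if i < n and w i = 0 if i ≥ n, and for k > 0 define the one-hidden-layer softmax network D_k(u) = (∑ i, w i * Real.exp (k * ⟪v i, u⟫)) / (∑ i, Real.exp (k * ⟪v i, u⟫)) where ⟪·,·⟫ is the real inner product. Then there exists k > 0 such that D_k(v j) ≥ 1/2 + ε/2 for every j < n and D_k(v j) ≤ 1/2 − ε/2 for every j ≥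 n; i.e., D_k is an ε-optimal discriminator for the two datasets. -/
/-!
At a training point `v j`, the softmax weight of hidden unit `i` is proportional to
`exp (k * (⟪v i, v j⟫ - 1))`. Distinct unit vectors satisfy `⟪v i, v j⟫ < 1 = ⟪v j, v j⟫`, so as
`k → ∞` the weights become one-hot at `j` and the network output tends to the label of `v j`
(`1` for real samples, `0` for fake ones). Since `ε < 1`, both limits clear the margin `ε / 2`,
and a single large `k` works for all of the finitely many samples.
-/

open RealInnerProductSpace

open Filter Topology Real

noncomputable def softmaxAverage {ι : Type*} [Fintype ι] (w a : ι → ℝ) (k : ℝ) : ℝ :=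
  (∑ i, w i * exp (k * a i)) / ∑ i, exp (k * a i)

theorem softmaxAverage_eq_sub {ι : Type*} [Fintype ι] (w a : ι → ℝ) (k b : ℝ) :
    softmaxAverage w a k = (∑ i, w i * exp (k * (a i - b))) / ∑ i, exp (k * (a i - b)) := by
  conv_rhs => rw [← mul_div_mul_right _ _ (exp_pos (k * b)).ne']
  simp only [softmaxAverage, Finset.sum_mul, mul_assoc, ← exp_add, ← mul_add, sub_add_cancel]

theorem tendsto_softmaxAverage_atTop {ι : Type*} [Fintype ι] [DecidableEq ι] (w a : ι → ℝ)
    {j : ι} (ha : ∀ i, i ≠ j → a i < a j) :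
    Tendsto (softmaxAverage w a) atTop (𝓝 (w j)) := by
  have hterm : ∀ i, Tendsto (fun k : ℝ => exp (k * (a i - a j))) atTop
      (𝓝 (if i = j then 1 else 0)) := by
    intro i
    split_ifs with hij
    · simp [hij]
    · exact tendsto_exp_atBot.comp (tendsto_id.atTop_mul_const_of_neg (sub_neg.2 (ha i hij)))
  have hnum := tendsto_finsetSum Finset.univ fun i _ => (hterm i).const_mul (w i)
  have hden := tendsto_finsetSum Finset.univ fun i _ => hterm i
  simp only [mul_ite, mul_one, mul_zero, Finset.sum_ite_eq', Finset.mem_univ, if_true]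
    at hnum hden
  rw [← div_one (w j)]
  exact (hnum.div hden one_ne_zero).congr fun k => (softmaxAverage_eq_sub w a k (a j)).symm

theorem inner_lt_inner_self_of_injective {ι E : Type*} [NormedAddCommGroup E]
    [InnerProductSpace ℝ E] {v : ι → E} (hinj : Function.Injective v) (hnorm : ∀ i, ‖v i‖ = 1)
    {i j : ι} (hij : i ≠ j) : ⟪v i, v j⟫ < ⟪v j, v j⟫ := by
  rw [real_inner_self_eq_norm_sq, hnorm, one_pow]
  exact (inner_lt_one_iff_real_of_norm_eq_one (hnorm i) (hnorm j)).2 (hinj.ne hij)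

theorem exists_eps_optimal_softmax_discriminator_general
    (d n m : ℕ)
    (ε : ℝ) (hε : ε ∈ Set.Ioo (0 : ℝ) 1)
    (v : Fin (n + m) → EuclideanSpace ℝ (Fin d))
    (hinj : Function.Injective v)
    (hnorm : ∀ i, ‖v i‖ = 1) :
    ∃ k : ℝ, 0 < k ∧
      ∀ j : Fin (n + m),
        (((j : ℕ) < n →
          (∑ i : Fin (n + m), (if (i : ℕ) < n then (1 : ℝ) else 0) * Real.exp (k * ⟪v i, v j⟫)) /
            (∑ i : Fin (n + m), Real.exp (k * ⟪v i, v j⟫)) ≥ 1 / 2 + ε / 2) ∧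
        ((j : ℕ) ≥ n →
          (∑ i : Fin (n + m), (if (i : ℕ) < n then (1 : ℝ) else 0) * Real.exp (k * ⟪v i, v j⟫)) /
            (∑ i : Fin (n + m), Real.exp (k * ⟪v i, v j⟫)) ≤ 1 / 2 - ε / 2)) := by
  obtain ⟨hε0, hε1⟩ := hε
  set w : Fin (n + m) → ℝ := fun i => if (i : ℕ) < n then 1 else 0
  have hopt : ∀ j : Fin (n + m), ∀ᶠ k in atTop,
      ((j : ℕ) < n → 1 / 2 + ε / 2 ≤ softmaxAverage w (fun i => ⟪v i, v j⟫) k) ∧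
      (n ≤ (j : ℕ) → softmaxAverage w (fun i => ⟪v i, v j⟫) k ≤ 1 / 2 - ε / 2) := by
    intro j
    have hlim := tendsto_softmaxAverage_atTop w (fun i => ⟪v i, v j⟫)
      fun i hij => inner_lt_inner_self_of_injective hinj hnorm hij
    by_cases hj : (j : ℕ) < n
    · simp only [w, if_pos hj] at hlim
      filter_upwards [hlim.eventually_const_le (u := 1 / 2 + ε / 2) (by linarith)] with k hk
      exact ⟨fun _ => hk, fun h => absurd hj h.not_gt⟩
    · simp only [w, if_neg hj] at hlim
      filter_upwards [hlim.eventually_le_const (u := 1 / 2 - ε / 2) (by linarith)] with k hk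
      exact ⟨fun h => absurd h hj, fun _ => hk⟩
  obtain ⟨k, hk, hopt⟩ := ((eventually_gt_atTop 0).and (eventually_all.2 hopt)).exists
  exact ⟨k, hk, hopt⟩

/-- Proposition 2: for two disjoint datasets of unit-norm samples (the first `n` real,
the last `m` fake) and `ε ∈ (0,1)`, there is a one-hidden-layer softmax network
`D_k` that is an ε-optimal discriminator. -/
theorem exists_eps_optimal_softmax_discriminator
    (d n m : ℕ) (hd : 0 < d) (hn : 0 < n) (hm : 0 < m)
    (ε : ℝ) (hε : ε ∈ Set.Ioo (0 : ℝ) 1)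
    (v : Fin (n + m) → EuclideanSpace ℝ (Fin d))
    (hinj : Function.Injective v)
    (hnorm : ∀ i, ‖v i‖ = 1) :
    ∃ k : ℝ, 0 < k ∧
      ∀ j : Fin (n + m),
        (((j : ℕ) < n →
          (∑ i : Fin (n + m), (if (i : ℕ) < n then (1 : ℝ) else 0) * Real.exp (k * ⟪v i, v j⟫)) /
            (∑ i : Fin (n + m), Real.exp (k * ⟪v i, v j⟫)) ≥ 1 / 2 + ε / 2) ∧
        ((j : ℕ) ≥ n →
          (∑ i : Fin (n + m), (if (i : ℕ) < n then (1 : ℝ) else 0) * Real.exp (k * ⟪v i, v j⟫)) /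
            (∑ i : Fin (n + m), Real.exp (k * ⟪v i, v j⟫)) ≤ 1 / 2 - ε / 2)) :=
  exists_eps_optimal_softmax_discriminator_general d n m ε hε v hinj hnorm
end
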